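/- arXiv:2405.14374 — 5 statements merged into one kernel-verified Lean document; each statement's English description precedes it below -/
import Mathlib

section
/- In a deterministic MDP with bounded rewards, finite Q-value initialization, and discount 0 ≤ γ < 1, if each (s,s') pair (with s' reachable from s) is visited infinitely often, then the QSS-learning iterates Q_n(s,s') converge to the optimal QSS-value Q*(s,s') for all such pairs as n → ∞. -/
/-- In a deterministic MDP with bounded rewards, finite Q-initialization
and `0 ≤ γ < 1`, if each pair `(s,s')` with `s'` reachable from `s` is visited (updated)
infinitely often by asynchronous QSS-learning, then `Q_n(s,s') → Q*(s,s')` for all such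
pairs as `n → ∞`. -/
theorem qss_learning_converges
    {S A : Type*} [Fintype S] [Fintype A] [Nonempty S] [Nonempty A]
    (step : S → A → S)                       -- deterministic transitions
    (SR : S → Finset S)
    (hSR : ∀ s s', s' ∈ SR s ↔ ∃ a, step s a = s')  -- reachability
    (hSRne : ∀ s, (SR s).Nonempty)
    (r : S → S → ℝ) (c : ℝ) (hr : ∀ s s', |r s s'| ≤ c)
    (γ : ℝ) (hγ0 : 0 ≤ γ) (hγ1 : γ < 1)
    (Qstar : S → S → ℝ)
    (hfix : ∀ s s', Qstar s s' =
      r s s' + γ * (SR s').sup' (hSRne s') (fun s'' => Qstar s' s''))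
    (Q : ℕ → S → S → ℝ)                     -- QSS-learning iterates
    (U : ℕ → Set (S × S))                   -- pairs updated at step n
    (hupd : ∀ n s s', (s, s') ∈ U n →
      Q (n + 1) s s' = r s s' + γ * (SR s').sup' (hSRne s') (fun s'' => Q n s' s''))
    (hkeep : ∀ n s s', (s, s') ∉ U n → Q (n + 1) s s' = Q n s s')
    (hio : ∀ s s', s' ∈ SR s → {n | (s, s') ∈ U n}.Infinite) :
    ∀ s s', s' ∈ SR s →
      Filter.Tendsto (fun n => Q n s s') Filter.atTop (nhds (Qstar s s')) := by
  classical
  set P : Finset (S × S) := Finset.univ.filter (fun p => p.2 ∈ SR p.1) with hP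
  obtain ⟨s0⟩ := ‹Nonempty S›
  obtain ⟨s1, hs1⟩ := hSRne s0
  have hPne : P.Nonempty := ⟨(s0, s1), by simp [hP, hs1]⟩
  set E : ℕ → ℝ := fun n => P.sup' hPne (fun p => |Q n p.1 p.2 - Qstar p.1 p.2|) with hE
  have hmem : ∀ n s s', s' ∈ SR s → |Q n s s' - Qstar s s'| ≤ E n := by
    intro n s s' h
    exact Finset.le_sup' (f := fun p => |Q n p.1 p.2 - Qstar p.1 p.2|)
      (show (s, s') ∈ P by simp [hP, h])
  have hE0 : ∀ n, 0 ≤ E n := fun n => le_trans (abs_nonneg _) (hmem n s0 s1 hs1)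
  -- the sup of the Q-values differs from the sup of Q* by at most the error
  have habs : ∀ (n : ℕ) (s' : S),
      |(SR s').sup' (hSRne s') (fun s'' => Q n s' s'') -
       (SR s').sup' (hSRne s') (fun s'' => Qstar s' s'')| ≤ E n := by
    intro n s'
    rw [abs_le]
    constructor
    · rw [neg_le, neg_sub, sub_le_iff_le_add]
      apply Finset.sup'_le
      intro s'' hs''
      have h1 := abs_le.mp (hmem n s' s'' hs'')
      have h2 : Q n s' s'' ≤ (SR s').sup' (hSRne s') (fun s'' => Q n s' s'') :=
        Finset.le_sup' _ hs''
      linarith [h1.1, h1.2]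
    · rw [sub_le_iff_le_add]
      apply Finset.sup'_le
      intro s'' hs''
      have h1 := abs_le.mp (hmem n s' s'' hs'')
      have h2 : Qstar s' s'' ≤ (SR s').sup' (hSRne s') (fun s'' => Qstar s' s'') :=
        Finset.le_sup' _ hs''
      linarith [h1.1, h1.2]
  -- contraction at each update
  have hcontr : ∀ n s s', (s, s') ∈ U n → |Q (n + 1) s s' - Qstar s s'| ≤ γ * E n := by
    intro n s s' h
    rw [hupd n s s' h, hfix s s']
    have heq : r s s' + γ * (SR s').sup' (hSRne s') (fun s'' => Q n s' s'') -
        (r s s' + γ * (SR s').sup' (hSRne s') (fun s'' => Qstar s' s'')) =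
        γ * ((SR s').sup' (hSRne s') (fun s'' => Q n s' s'') -
             (SR s').sup' (hSRne s') (fun s'' => Qstar s' s'')) := by ring
    rw [heq, abs_mul, abs_of_nonneg hγ0]
    exact mul_le_mul_of_nonneg_left (habs n s') hγ0
  -- the error is nonincreasing
  have hmono : ∀ n, E (n + 1) ≤ E n := by
    intro n
    apply Finset.sup'_le
    intro p hp
    have hre : p.2 ∈ SR p.1 := by
      have := Finset.mem_filter.mp (hP ▸ hp)
      exact this.2
    by_cases hU : p ∈ U n
    · have hU' : (p.1, p.2) ∈ U n := by simpa using hU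
      have := hcontr n p.1 p.2 hU'
      nlinarith [hE0 n]
    · have hU' : (p.1, p.2) ∉ U n := by simpa using hU
      rw [hkeep n p.1 p.2 hU']
      exact hmem n p.1 p.2 hre
  have hanti : Antitone E := antitone_nat_of_succ_le hmono
  -- phase argument
  have claim : ∀ k, ∃ N, ∀ n, N ≤ n → E n ≤ γ ^ k * E 0 := by
    intro k
    induction k with
    | zero => exact ⟨0, fun n _ => by simpa using hanti (Nat.zero_le n)⟩
    | succ k ih =>
      obtain ⟨N, hN⟩ := ih
      have hch : ∀ p ∈ P, ∃ m, N ≤ m ∧ p ∈ U m := by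
        intro p hp
        have hre : p.2 ∈ SR p.1 := by have h := hp; rw [hP, Finset.mem_filter] at h; exact h.2
        obtain ⟨m, hm1, hm2⟩ := (hio p.1 p.2 hre).exists_gt N
        exact ⟨m, le_of_lt hm2, by simpa using hm1⟩
      choose g hg1 hg2 using hch
      refine ⟨P.sup (fun q => if h : q ∈ P then g q h else 0) + 1, fun n hn => ?_⟩
      -- per-pair lemma: once updated after time N, the error stays small
      have key : ∀ s s', s' ∈ SR s → ∀ n, (∃ m, N ≤ m ∧ m < n ∧ (s, s') ∈ U m) →
          |Q n s s' - Qstar s s'| ≤ γ ^ (k + 1) * E 0 := by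
        intro s s' hre n
        induction n with
        | zero => rintro ⟨m, _, hm, _⟩; omega
        | succ n ih =>
          rintro ⟨m, hm1, hm2, hm3⟩
          by_cases hU : (s, s') ∈ U n
          · have hNn : N ≤ n := le_trans hm1 (Nat.lt_succ_iff.mp hm2)
            have h1 := hcontr n s s' hU
            have h2 := hN n hNn
            calc |Q (n + 1) s s' - Qstar s s'| ≤ γ * E n := h1
              _ ≤ γ * (γ ^ k * E 0) := mul_le_mul_of_nonneg_left h2 hγ0
              _ = γ ^ (k + 1) * E 0 := by ring
          · rw [hkeep n s s' hU]
            apply ih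
            refine ⟨m, hm1, ?_, hm3⟩
            rcases Nat.lt_succ_iff_lt_or_eq.mp hm2 with h | h
            · exact h
            · exact absurd (h ▸ hm3) hU
      apply Finset.sup'_le
      intro p hp
      have hre : p.2 ∈ SR p.1 := by have h := hp; rw [hP, Finset.mem_filter] at h; exact h.2
      apply key p.1 p.2 hre n
      refine ⟨g p hp, hg1 p hp, ?_, by simpa using hg2 p hp⟩
      have hle : g p hp ≤ P.sup (fun q => if h : q ∈ P then g q h else 0) := by
        have := Finset.le_sup (f := fun q => if h : q ∈ P then g q h else 0) hp
        simpa [hp] using this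
      omega
  -- conclude
  intro s s' hre
  rw [Metric.tendsto_atTop]
  intro ε hε
  have hlim : Filter.Tendsto (fun k => γ ^ k * E 0) Filter.atTop (nhds 0) := by
    simpa using (tendsto_pow_atTop_nhds_zero_of_lt_one hγ0 hγ1).mul_const (E 0)
  obtain ⟨k, hk⟩ := (hlim.eventually_lt_const hε).exists
  obtain ⟨N, hN⟩ := claim k
  refine ⟨N, fun n hn => ?_⟩
  rw [Real.dist_eq]
  exact lt_of_le_of_lt ((hmem n s s' hre).trans (hN n hn)) hk
end

section
/- In a deterministic MDP, for every policy π and every transition (s, a, s') with p(s'|s,a) = 1, the action-value Q^π(s,a) equals the state–next-state value Q^π(s,s'); in particular, the optimal QSA-values and optimal QSS-values agree on corresponding transitions: Q*(s,a) = Q*(s,s') whenever a deterministically leads from s to s'. -/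
/-- In a deterministic MDP, for every policy `π` and every transition
`s →ᵃ s'` (i.e. `step s a = s'`), the action-value `Q^π(s,a)` equals the
state–next-state value `Q^π(s,s')`; and the optimal QSA- and QSS-values agree on
corresponding transitions: `Q*(s,a) = Q*(s,s')` whenever `a` deterministically
leads from `s` to `s'`. -/
theorem qsa_eq_qss_deterministic
    {S A : Type*} [Fintype S] [Fintype A] [Nonempty S] [Nonempty A]
    (step : S → A → S)                 -- deterministic transitions
    (SR : S → Finset S)
    (hSR : ∀ s s', s' ∈ SR s ↔ ∃ a, step s a = s')
    (hSRne : ∀ s, (SR s).Nonempty)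
    (r : S → S → ℝ)                    -- reward depends only on the transition
    (γ : ℝ) (hγ0 : 0 ≤ γ) (hγ1 : γ < 1)
    -- policy π and its value function
    (π : S → A) (Vπ : S → ℝ)
    (hVπ : ∀ s, Vπ s = r s (step s (π s)) + γ * Vπ (step s (π s)))
    (Qπsa : S → A → ℝ)
    (hQπsa : ∀ s a, Qπsa s a = r s (step s a) + γ * Vπ (step s a))
    (Qπss : S → S → ℝ)
    (hQπss : ∀ s s', Qπss s s' = r s s' + γ * Vπ s')
    -- optimal QSA- and QSS-values (Bellman fixed points)
    (Qsa : S → A → ℝ)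
    (hQsa : ∀ s a, Qsa s a =
      r s (step s a) + γ * Finset.univ.sup' Finset.univ_nonempty
        (fun a' => Qsa (step s a) a'))
    (Qss : S → S → ℝ)
    (hQss : ∀ s s', Qss s s' =
      r s s' + γ * (SR s').sup' (hSRne s') (fun s'' => Qss s' s'')) :
    (∀ s a s', step s a = s' → Qπsa s a = Qπss s s') ∧
    (∀ s a s', step s a = s' → Qsa s a = Qss s s') := by
  constructor
  · intro s a s' h
    rw [hQπsa, hQπss, h]
  · -- sup over SR s' equals sup over actions of Qss s' (step s' ·)
    have hsup : ∀ s' : S, (SR s').sup' (hSRne s') (fun s'' => Qss s' s'')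
        = Finset.univ.sup' Finset.univ_nonempty (fun a' : A => Qss s' (step s' a')) := by
      intro s'
      apply le_antisymm
      · apply Finset.sup'_le
        intro s'' hs''
        obtain ⟨a, ha⟩ := (hSR s' s'').1 hs''
        exact ha ▸ Finset.le_sup' (fun a' : A => Qss s' (step s' a')) (Finset.mem_univ a)
      · apply Finset.sup'_le
        intro a _
        exact Finset.le_sup' (fun s'' => Qss s' s'') ((hSR s' (step s' a)).2 ⟨a, rfl⟩)
    set D : S × A → ℝ := fun p => |Qsa p.1 p.2 - Qss p.1 (step p.1 p.2)| with hD
    have hne : (Finset.univ : Finset (S × A)).Nonempty := Finset.univ_nonempty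
    set M : ℝ := Finset.univ.sup' hne D with hM
    have hM0 : 0 ≤ M := le_trans (abs_nonneg _) (Finset.le_sup' D (Finset.mem_univ (Classical.arbitrary _)))
    have key : ∀ p : S × A, D p ≤ γ * M := by
      intro ⟨s, a⟩
      have h1 : Qsa s a - Qss s (step s a)
          = γ * (Finset.univ.sup' Finset.univ_nonempty (fun a' => Qsa (step s a) a')
              - Finset.univ.sup' Finset.univ_nonempty (fun a' : A => Qss (step s a) (step (step s a) a'))) := by
        rw [hQsa, hQss, hsup]; ring
      have habs : |Finset.univ.sup' Finset.univ_nonempty (fun a' => Qsa (step s a) a')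
          - Finset.univ.sup' Finset.univ_nonempty (fun a' : A => Qss (step s a) (step (step s a) a'))| ≤ M := by
        rw [abs_sub_le_iff]
        constructor
        · rw [sub_le_iff_le_add]
          apply Finset.sup'_le
          intro a' _
          have h1 : Qsa (step s a) a' - Qss (step s a) (step (step s a) a') ≤ D (step s a, a') :=
            le_abs_self _
          have h2 : D (step s a, a') ≤ M := Finset.le_sup' D (Finset.mem_univ _)
          have h3 : Qss (step s a) (step (step s a) a')
              ≤ Finset.univ.sup' Finset.univ_nonempty (fun a' : A => Qss (step s a) (step (step s a) a')) :=
            Finset.le_sup' (fun a' : A => Qss (step s a) (step (step s a) a')) (Finset.mem_univ a')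
          linarith
        · rw [sub_le_iff_le_add]
          apply Finset.sup'_le
          intro a' _
          have h1 : -(D (step s a, a')) ≤ Qsa (step s a) a' - Qss (step s a) (step (step s a) a') :=
            neg_abs_le _
          have h2 : D (step s a, a') ≤ M := Finset.le_sup' D (Finset.mem_univ _)
          have h3 : Qsa (step s a) a'
              ≤ Finset.univ.sup' Finset.univ_nonempty (fun a' => Qsa (step s a) a') :=
            Finset.le_sup' _ (Finset.mem_univ a')
          linarith
      calc D (s, a) = γ * |_| := by rw [hD]; simp only; rw [h1, abs_mul, abs_of_nonneg hγ0]
        _ ≤ γ * M := mul_le_mul_of_nonneg_left habs hγ0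
    have hMle : M ≤ γ * M := by
      rw [hM]
      exact Finset.sup'_le _ _ fun p _ => key p
    have hMz : M = 0 := by nlinarith
    intro s a s' h
    subst h
    have : D (s, a) ≤ 0 := (key _).trans (by rw [hMz, mul_zero])
    have := abs_nonneg (Qsa s a - Qss s (step s a))
    have : D (s, a) = 0 := le_antisymm ‹D (s,a) ≤ 0› ‹_›
    have := abs_eq_zero.mp this
    linarith
end

section
/- In a deterministic MDP, the value of the policy produced by state-constrained QSS-learning is at least the value of the policy produced by batch-constrained QSS-learning at every state in the dataset: V_{π_SCQL}(s) ≥ V_{π_BCQL}(s) for all s ∈ D. -/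
/-- Theorem 3.7: In a deterministic MDP, the value of the policy produced
by state-constrained QSS-learning is at least the value of the policy produced by
batch-constrained QSS-learning at every state in the dataset:
`V_{π_SCQL}(s) ≥ V_{π_BCQL}(s)` for all `s ∈ D`. -/
theorem scql_policy_value_ge_bcql
    {S A : Type*} [Fintype S] [Fintype A]
    (step : S → A → S)                 -- deterministic transitions
    (r : S → S → ℝ) (c : ℝ) (hr : ∀ s s', |r s s'| ≤ c)
    (γ : ℝ) (hγ0 : 0 ≤ γ) (hγ1 : γ < 1)
    (D : Finset (S × A))               -- dataset of state-action pairs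
    (Dstate : Finset S)                -- states appearing in the dataset
    (hDs : ∀ p ∈ D, p.1 ∈ Dstate ∧ step p.1 p.2 ∈ Dstate)
    (hDne : ∀ s ∈ Dstate, ∃ a, (s, a) ∈ D)
    -- BCQL: batch-constrained Q-value and its greedy policy
    (QB : S → A → ℝ)
    (hQB : ∀ p ∈ D, QB p.1 p.2 =
      r p.1 (step p.1 p.2) + γ * ⨆ a' : {a' // (step p.1 p.2, a') ∈ D},
        QB (step p.1 p.2) a'.1)
    (πB : S → A)
    (hπB : ∀ s ∈ Dstate, (s, πB s) ∈ D ∧ ∀ a, (s, a) ∈ D → QB s a ≤ QB s (πB s))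
    -- SCQL: state-constrained QSS-value and its greedy policy
    (QS : S → S → ℝ)
    (hQS : ∀ s ∈ Dstate, ∀ s' ∈ Dstate, (∃ a, step s a = s') →
      QS s s' = r s s' + γ * ⨆ s'' : {t // t ∈ Dstate ∧ ∃ a, step s' a = t},
        QS s' s''.1)
    (πS : S → A)
    (hπS : ∀ s ∈ Dstate, step s (πS s) ∈ Dstate ∧
      ∀ s' ∈ Dstate, (∃ a, step s a = s') → QS s s' ≤ QS s (step s (πS s)))
    -- values of the two greedy policies
    (VB VS : S → ℝ)
    (hVB : ∀ s, VB s = r s (step s (πB s)) + γ * VB (step s (πB s)))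
    (hVS : ∀ s, VS s = r s (step s (πS s)) + γ * VS (step s (πS s)))
    (hVBQ : ∀ s ∈ Dstate, VB s = QB s (πB s))
    (hVSQ : ∀ s ∈ Dstate, VS s = QS s (step s (πS s))) :
    ∀ s ∈ Dstate, VB s ≤ VS s := by
  intro s hs
  -- Key claim: QB ≤ QS ∘ step on D
  have key : ∀ p ∈ D, QB p.1 p.2 ≤ QS p.1 (step p.1 p.2) := by
    intro p hp
    have hDne' : D.Nonempty := ⟨p, hp⟩
    obtain ⟨p0, hp0, hmax⟩ := D.exists_max_image
      (fun q => QB q.1 q.2 - QS q.1 (step q.1 q.2)) hDne'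
    set Δ : ℝ := QB p0.1 p0.2 - QS p0.1 (step p0.1 p0.2) with hΔdef
    have hΔmem : ∀ q ∈ D, QB q.1 q.2 - QS q.1 (step q.1 q.2) ≤ Δ := hmax
    have hcontr : Δ ≤ γ * Δ := by
      set s1 := step p0.1 p0.2 with hs1def
      have hs0 : p0.1 ∈ Dstate := (hDs p0 hp0).1
      have hs1 : s1 ∈ Dstate := (hDs p0 hp0).2
      have hQBe := hQB p0 hp0
      rw [← hs1def] at hQBe
      have hQSe := hQS p0.1 hs0 s1 hs1 ⟨p0.2, rfl⟩
      obtain ⟨a1, ha1⟩ := hDne s1 hs1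
      haveI : Nonempty {a' // (s1, a') ∈ D} := ⟨⟨a1, ha1⟩⟩
      have hbddS : BddAbove (Set.range fun t : {t // t ∈ Dstate ∧ ∃ a, step s1 a = t} =>
          QS s1 t.1) := (Set.finite_range _).bddAbove
      have hsupB : (⨆ a' : {a' // (s1, a') ∈ D}, QB s1 a'.1) ≤
          Δ + ⨆ t : {t // t ∈ Dstate ∧ ∃ a, step s1 a = t}, QS s1 t.1 := by
        apply ciSup_le
        intro a'
        have hmem : (s1, a'.1) ∈ D := a'.2
        have h1 : QB s1 a'.1 - QS s1 (step s1 a'.1) ≤ Δ := hΔmem (s1, a'.1) hmem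
        have h2 : QS s1 (step s1 a'.1) ≤
            ⨆ t : {t // t ∈ Dstate ∧ ∃ a, step s1 a = t}, QS s1 t.1 :=
          le_ciSup hbddS ⟨step s1 a'.1, (hDs _ hmem).2, ⟨a'.1, rfl⟩⟩
        linarith
      have hmul := mul_le_mul_of_nonneg_left hsupB hγ0
      have hdist : γ * (Δ + ⨆ t : {t // t ∈ Dstate ∧ ∃ a, step s1 a = t}, QS s1 t.1)
          = γ * Δ + γ * ⨆ t : {t // t ∈ Dstate ∧ ∃ a, step s1 a = t}, QS s1 t.1 := by ring
      rw [hdist] at hmul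
      have hΔeq : Δ = γ * (⨆ a' : {a' // (s1, a') ∈ D}, QB s1 a'.1)
          - γ * (⨆ t : {t // t ∈ Dstate ∧ ∃ a, step s1 a = t}, QS s1 t.1) := by
        rw [hΔdef, hQBe, hQSe]; ring
      linarith
    have hΔ0 : Δ ≤ 0 := by nlinarith
    have := hΔmem p hp
    linarith
  -- Conclude
  have h1 := hπB s hs
  have h2 := hπS s hs
  have hmemB : (s, πB s) ∈ D := h1.1
  have hk := key (s, πB s) hmemB
  have hstep : step s (πB s) ∈ Dstate := (hDs _ hmemB).2
  have hopt := h2.2 (step s (πB s)) hstep ⟨πB s, rfl⟩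
  have hB := hVBQ s hs
  have hS := hVSQ s hs
  simp only at hk
  linarith
end

section
/- Performing QSS-learning on all reachable state–next-state pairs sampled from the dataset converges to the optimal value function of the state-constrained MDP M_S, in which transitions exist exactly between dataset states that are reachable from one another (with out-of-dataset states transitioning to a terminal state). -/
/-- Theorem 3.3: Performing QSS-learning on all reachable
state–next-state pairs sampled from the dataset (each such pair infinitely often)
converges to the optimal value function of the state-constrained MDP `M_S`, in which
transitions exist exactly between dataset states that are reachable from one another.
`QMS` denotes the optimal QSS-value of `M_S`, i.e. the fixed point of the Bellman
operator restricted to dataset states and dataset-reachable successors. -/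
theorem qss_learning_converges_to_state_constrained_optimum
    {S A : Type*} [Fintype S] [Fintype A] [Nonempty S]
    (step : S → A → S)                 -- deterministic transitions of the original MDP
    (r : S → S → ℝ) (c : ℝ) (hr : ∀ s s', |r s s'| ≤ c)
    (γ : ℝ) (hγ0 : 0 ≤ γ) (hγ1 : γ < 1)
    (Dstate : Finset S)                -- states of the dataset
    (SC : S → Finset S)                -- dataset states reachable from a given state
    (hSC : ∀ s t, t ∈ SC s ↔ t ∈ Dstate ∧ ∃ a, step s a = t)
    (hSCne : ∀ s ∈ Dstate, (SC s).Nonempty)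
    -- optimal QSS-value of the state-constrained MDP M_S
    (QMS : S → S → ℝ)
    (hfix : ∀ s, ∀ hs : s ∈ Dstate, ∀ s' ∈ SC s, ∀ hs' : s' ∈ Dstate,
      QMS s s' = r s s' + γ * (SC s').sup' (hSCne s' hs') (fun s'' => QMS s' s''))
    -- QSS-learning iterates, sampling pairs (s ∈ D, s' ∈ D ∩ SR(s))
    (Q : ℕ → S → S → ℝ)
    (U : ℕ → Set (S × S))              -- pairs sampled/updated at step n
    (hU : ∀ n p, p ∈ U n → p.1 ∈ Dstate ∧ p.2 ∈ SC p.1)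
    (hupd : ∀ n s s', (s, s') ∈ U n → ∀ hs' : s' ∈ Dstate,
      Q (n + 1) s s' = r s s' + γ * (SC s').sup' (hSCne s' hs') (fun s'' => Q n s' s''))
    (hkeep : ∀ n s s', (s, s') ∉ U n → Q (n + 1) s s' = Q n s s')
    (hio : ∀ s ∈ Dstate, ∀ s' ∈ SC s, {n | (s, s') ∈ U n}.Infinite) :
    ∀ s ∈ Dstate, ∀ s' ∈ SC s,
      Filter.Tendsto (fun n => Q n s s') Filter.atTop (nhds (QMS s s')) := by
  classical
  intro s hs s' hss'
  -- set of valid pairs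
  set P : Finset (S × S) :=
    (Dstate ×ˢ (Finset.univ : Finset S)).filter (fun p => p.2 ∈ SC p.1) with hP
  have hmemP : ∀ p : S × S, p ∈ P ↔ p.1 ∈ Dstate ∧ p.2 ∈ SC p.1 := by
    intro p
    simp [hP, Finset.mem_filter, Finset.mem_product]
  have hPne : P.Nonempty := ⟨(s, s'), (hmemP (s, s')).2 ⟨hs, hss'⟩⟩
  have hD : ∀ {a b : S}, b ∈ SC a → b ∈ Dstate := fun {a b} h => ((hSC a b).1 h).1
  -- error sequence
  set e : ℕ → ℝ := fun n => P.sup' hPne (fun p => |Q n p.1 p.2 - QMS p.1 p.2|) with he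
  have hbound : ∀ n (p : S × S), p ∈ P → |Q n p.1 p.2 - QMS p.1 p.2| ≤ e n := by
    intro n p hp
    simp only [he]
    exact Finset.le_sup' (fun p => |Q n p.1 p.2 - QMS p.1 p.2|) hp
  have he0 : ∀ n, 0 ≤ e n :=
    fun n => le_trans (abs_nonneg _) (hbound n hPne.choose hPne.choose_spec)
  -- after an update, the error contracts by γ
  have hkey : ∀ n (p : S × S), p ∈ P → p ∈ U n →
      |Q (n + 1) p.1 p.2 - QMS p.1 p.2| ≤ γ * e n := by
    intro n p hp hpU
    obtain ⟨hp1, hp2⟩ := (hmemP p).1 hp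
    have hp2D : p.2 ∈ Dstate := hD hp2
    have hpU' : (p.1, p.2) ∈ U n := by simpa using hpU
    rw [hupd n p.1 p.2 hpU' hp2D, hfix p.1 hp1 p.2 hp2 hp2D]
    have hrw : r p.1 p.2 + γ * (SC p.2).sup' (hSCne p.2 hp2D) (fun s'' => Q n p.2 s'')
        - (r p.1 p.2 + γ * (SC p.2).sup' (hSCne p.2 hp2D) (fun s'' => QMS p.2 s''))
        = γ * ((SC p.2).sup' (hSCne p.2 hp2D) (fun s'' => Q n p.2 s'')
            - (SC p.2).sup' (hSCne p.2 hp2D) (fun s'' => QMS p.2 s'')) := by ring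
    rw [hrw, abs_mul, abs_of_nonneg hγ0]
    refine mul_le_mul_of_nonneg_left ?_ hγ0
    have hmem : ∀ x ∈ SC p.2, (p.2, x) ∈ P :=
      fun x hx => (hmemP (p.2, x)).2 ⟨hp2D, hx⟩
    rw [abs_sub_le_iff]
    constructor
    · rw [sub_le_iff_le_add]
      refine Finset.sup'_le _ _ (fun x hx => ?_)
      have h1 := hbound n (p.2, x) (hmem x hx)
      have h2 : QMS p.2 x ≤ (SC p.2).sup' (hSCne p.2 hp2D) (fun s'' => QMS p.2 s'') :=
        Finset.le_sup' _ hx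
      have := abs_sub_le_iff.1 h1
      simp only at this h2 ⊢
      linarith [this.1]
    · rw [sub_le_iff_le_add]
      refine Finset.sup'_le _ _ (fun x hx => ?_)
      have h1 := hbound n (p.2, x) (hmem x hx)
      have h2 : Q n p.2 x ≤ (SC p.2).sup' (hSCne p.2 hp2D) (fun s'' => Q n p.2 s'') :=
        Finset.le_sup' _ hx
      have := abs_sub_le_iff.1 h1
      simp only at this h2 ⊢
      linarith [this.2]
  -- e is nonincreasing
  have hmono1 : ∀ n, e (n + 1) ≤ e n := by
    intro n
    refine Finset.sup'_le _ _ (fun p hp => ?_)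
    by_cases h : p ∈ U n
    · exact (hkey n p hp h).trans (by nlinarith [he0 n])
    · have h' : (p.1, p.2) ∉ U n := by simpa using h
      rw [hkeep n p.1 p.2 h']
      exact hbound n p hp
  have hanti : Antitone e := antitone_nat_of_succ_le hmono1
  -- persistence: once updated after time n, error stays ≤ γ * e n
  have hpersist : ∀ n k (p : S × S), p ∈ P → (∃ m, n ≤ m ∧ m < k ∧ p ∈ U m) →
      |Q k p.1 p.2 - QMS p.1 p.2| ≤ γ * e n := by
    intro n k
    induction k with
    | zero => rintro p hp ⟨m, _, hm, _⟩; omega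
    | succ k ih =>
      rintro p hp ⟨m, hnm, hmk, hpm⟩
      by_cases h : p ∈ U k
      · have hk : n ≤ k := by omega
        exact (hkey k p hp h).trans (mul_le_mul_of_nonneg_left (hanti hk) hγ0)
      · have hmk' : m < k := by
          rcases Nat.lt_succ_iff_lt_or_eq.1 hmk with h' | h'
          · exact h'
          · exact absurd (h' ▸ hpm) h
        have h' : (p.1, p.2) ∉ U k := by simpa using h
        rw [hkeep k p.1 p.2 h']
        exact ih p hp ⟨m, hnm, hmk', hpm⟩
  -- sweeps: every pair is updated between n and some N
  have hsweep : ∀ n, ∃ N, n < N ∧ e N ≤ γ * e n := by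
    intro n
    have hex : ∀ p ∈ P, ∃ m, n < m ∧ p ∈ U m := by
      intro p hp
      obtain ⟨hp1, hp2⟩ := (hmemP p).1 hp
      have hinf := hio p.1 hp1 p.2 hp2
      obtain ⟨m, hm1, hm2⟩ := hinf.exists_gt n
      exact ⟨m, hm2, by simpa using hm1⟩
    choose! f hf1 hf2 using hex
    refine ⟨(P.sup f) + 1, ?_, ?_⟩
    · have := Finset.le_sup (f := f) hPne.choose_spec
      have := hf1 hPne.choose hPne.choose_spec
      omega
    · refine Finset.sup'_le _ _ (fun p hp => ?_)
      refine hpersist n (P.sup f + 1) p hp ⟨f p, le_of_lt (hf1 p hp), ?_, hf2 p hp⟩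
      have := Finset.le_sup (f := f) hp
      omega
  -- iterate sweeps
  choose N hN1 hN2 using hsweep
  set t : ℕ → ℕ := fun k => Nat.rec 0 (fun _ prev => N prev) k with ht
  have htgeo : ∀ k, e (t k) ≤ γ ^ k * e 0 := by
    intro k
    induction k with
    | zero =>
      have h0 : t 0 = 0 := rfl
      rw [h0, pow_zero, one_mul]
    | succ k ih =>
      have : e (t (k + 1)) ≤ γ * e (t k) := hN2 (t k)
      calc e (t (k + 1)) ≤ γ * e (t k) := this
        _ ≤ γ * (γ ^ k * e 0) := mul_le_mul_of_nonneg_left ih hγ0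
        _ = γ ^ (k + 1) * e 0 := by ring
  -- e tends to 0
  have hepow : Filter.Tendsto (fun k => γ ^ k * e 0) Filter.atTop (nhds 0) := by
    have := (tendsto_pow_atTop_nhds_zero_of_lt_one hγ0 hγ1).mul_const (e 0)
    simpa using this
  have hetendsto : Filter.Tendsto e Filter.atTop (nhds 0) := by
    rw [Metric.tendsto_atTop]
    intro ε hε
    obtain ⟨k, hk⟩ := (hepow.eventually (gt_mem_nhds hε)).exists
    refine ⟨t k, fun n hn => ?_⟩
    rw [Real.dist_eq, sub_zero, abs_of_nonneg (he0 n)]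
    exact lt_of_le_of_lt ((hanti hn).trans (htgeo k)) hk
  -- conclude
  have habs : Filter.Tendsto (fun n => |Q n s s' - QMS s s'|) Filter.atTop (nhds 0) := by
    refine squeeze_zero (fun n => abs_nonneg _) (fun n => ?_) hetendsto
    exact hbound n (s, s') ((hmemP (s, s')).2 ⟨hs, hss'⟩)
  rw [tendsto_iff_dist_tendsto_zero]
  simpa [Real.dist_eq] using habs
end

section
/- In a deterministic MDP, the error of QSS-learning after k full sweeps (intervals in which every (s,s') pair is updated at least once) is bounded by γ^k times the initial maximum error: max_{s,s'} |Q_k(s,s') − Q*(s,s')| ≤ γ^k · max_{s,s'} |Q_0(s,s') − Q*(s,s')|; since 0 ≤ γ < 1 this bound tends to 0 as k → ∞. -/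
lemma abs_sup'_sub_sup'_le' {α : Type*} (t : Finset α) (ht : t.Nonempty)
    (f g : α → ℝ) (M : ℝ) (h : ∀ a ∈ t, |f a - g a| ≤ M) :
    |t.sup' ht f - t.sup' ht g| ≤ M := by
  rw [abs_le]
  constructor
  · have : t.sup' ht g ≤ t.sup' ht f + M := by
      apply Finset.sup'_le
      intro a ha
      have := (abs_le.1 (h a ha)).1
      have hf : f a ≤ t.sup' ht f := Finset.le_sup' f ha
      linarith
    linarith
  · have : t.sup' ht f ≤ t.sup' ht g + M := by
      apply Finset.sup'_le
      intro a ha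
      have := (abs_le.1 (h a ha)).2
      have hg : g a ≤ t.sup' ht g := Finset.le_sup' g ha
      linarith
    linarith

/-- After `k` full sweeps of the synchronous QSS-update, the maximum
error is bounded by `γ^k` times the initial maximum error, and this bound tends to 0. -/
theorem qss_error_geometric_decay
    {S : Type*} [Fintype S] [Nonempty S]
    (SR : S → Finset S) (hSR : ∀ s, (SR s).Nonempty)
    (r : S → S → ℝ) (c : ℝ) (hr : ∀ s s', |r s s'| ≤ c)
    (γ : ℝ) (hγ0 : 0 ≤ γ) (hγ1 : γ < 1)
    (Qstar : S → S → ℝ)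
    (hfix : ∀ s s', Qstar s s' =
      r s s' + γ * (SR s').sup' (hSR s') (fun s'' => Qstar s' s''))
    (Q : ℕ → S → S → ℝ)                -- iterates: Q (k+1) is a full sweep on Q k
    (hstep : ∀ k s s', Q (k + 1) s s' =
      r s s' + γ * (SR s').sup' (hSR s') (fun s'' => Q k s' s'')) :
    (∀ k : ℕ, (⨆ p : S × S, |Q k p.1 p.2 - Qstar p.1 p.2|) ≤
        γ ^ k * ⨆ p : S × S, |Q 0 p.1 p.2 - Qstar p.1 p.2|) ∧
    Filter.Tendsto
      (fun k => γ ^ k * ⨆ p : S × S, |Q 0 p.1 p.2 - Qstar p.1 p.2|)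
      Filter.atTop (nhds 0) := by
  set E : ℕ → ℝ := fun k => ⨆ p : S × S, |Q k p.1 p.2 - Qstar p.1 p.2| with hE
  have hbdd : ∀ k, BddAbove (Set.range fun p : S × S => |Q k p.1 p.2 - Qstar p.1 p.2|) :=
    fun k => Set.Finite.bddAbove (Set.finite_range _)
  have hle : ∀ k (p : S × S), |Q k p.1 p.2 - Qstar p.1 p.2| ≤ E k :=
    fun k p => le_ciSup (hbdd k) p
  have hstepE : ∀ k, E (k + 1) ≤ γ * E k := by
    intro k
    apply ciSup_le
    rintro ⟨s, s'⟩
    have heq : Q (k + 1) s s' - Qstar s s' =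
        γ * ((SR s').sup' (hSR s') (fun s'' => Q k s' s'') -
             (SR s').sup' (hSR s') (fun s'' => Qstar s' s'')) := by
      rw [hstep, hfix]; ring
    rw [heq, abs_mul, abs_of_nonneg hγ0]
    apply mul_le_mul_of_nonneg_left _ hγ0
    exact abs_sup'_sub_sup'_le' _ _ _ _ _ (fun a _ => hle k (s', a))
  have hmain : ∀ k, E k ≤ γ ^ k * E 0 := by
    intro k
    induction k with
    | zero => simp
    | succ n ih =>
        calc E (n + 1) ≤ γ * E n := hstepE n
        _ ≤ γ * (γ ^ n * E 0) := by exact mul_le_mul_of_nonneg_left ih hγ0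
        _ = γ ^ (n + 1) * E 0 := by ring
  refine ⟨hmain, ?_⟩
  have : Filter.Tendsto (fun k => γ ^ k) Filter.atTop (nhds 0) :=
    tendsto_pow_atTop_nhds_zero_of_lt_one hγ0 hγ1
  simpa using this.mul_const (E 0)
end
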